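/- arXiv:1705.04735 — 2 statements merged into one kernel-verified Lean document; each statement's English description precedes it below -/
import Mathlib

section
/- For any graph H and any graph G of order n with minimum degree at least two, γ_r(G∘H) ≤ n. -/
open Finset
open scoped Classical

/-- The lexicographic product of two simple graphs. -/
def lexProd {α β : Type*} (G : SimpleGraph α) (H : SimpleGraph β) :
    SimpleGraph (α × β) where
  Adj p q := G.Adj p.1 q.1 ∨ (p.1 = q.1 ∧ H.Adj p.2 q.2)
  symm := by
    constructor
    rintro ⟨a, b⟩ ⟨c, d⟩ (h | ⟨h1, h2⟩)
    · exact Or.inl h.symm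
    · exact Or.inr ⟨h1.symm, h2.symm⟩
  loopless := by
    constructor
    rintro ⟨a, b⟩ (h | ⟨h1, h2⟩)
    · exact G.irrefl h
    · exact H.irrefl h2

/-- A vertex `w` is undefended with respect to `g` if `g w = 0` and `g x = 0`
for every neighbour `x` of `w`. -/
def Undefended {α : Type*} (G : SimpleGraph α) (g : α → ℕ) (w : α) : Prop :=
  g w = 0 ∧ ∀ x, G.Adj w x → g x = 0

/-- A weak Roman dominating function. -/
def IsWRDF {α : Type*} (G : SimpleGraph α) (f : α → ℕ) : Prop :=
  (∀ v, f v ≤ 2) ∧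
    ∀ v, f v = 0 → ∃ u, G.Adj u v ∧ 1 ≤ f u ∧
      ∀ w, ¬ Undefended G (Function.update (Function.update f v 1) u (f u - 1)) w

/-- The weak Roman domination number. -/
noncomputable def weakRomanNumber {α : Type*} (G : SimpleGraph α) [Fintype α] : ℕ :=
  sInf {k | ∃ f : α → ℕ, IsWRDF G f ∧ ∑ v, f v = k}

/-- A dominating set. -/
def IsDomSet {α : Type*} (G : SimpleGraph α) (D : Finset α) : Prop :=
  ∀ v ∉ D, ∃ u ∈ D, G.Adj u v

/-- The domination number. -/
noncomputable def domNumber {α : Type*} (G : SimpleGraph α) [Fintype α] : ℕ :=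
  sInf {k | ∃ D : Finset α, IsDomSet G D ∧ D.card = k}

/-- A total dominating set. -/
def IsTotalDomSet {α : Type*} (G : SimpleGraph α) (S : Finset α) : Prop :=
  ∀ v, ∃ u ∈ S, G.Adj u v

/-- The total domination number. -/
noncomputable def totalDomNumber {α : Type*} (G : SimpleGraph α) [Fintype α] : ℕ :=
  sInf {k | ∃ S : Finset α, IsTotalDomSet G S ∧ S.card = k}

/-- A double total dominating set: every vertex has at least two neighbours in `S`. -/
def IsDoubleTotalDomSet {α : Type*} (G : SimpleGraph α) (S : Finset α) : Prop :=
  ∀ v, ∃ u₁ ∈ S, ∃ u₂ ∈ S, u₁ ≠ u₂ ∧ G.Adj u₁ v ∧ G.Adj u₂ v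

/-- The double total domination number. -/
noncomputable def doubleTotalDomNumber {α : Type*} (G : SimpleGraph α) [Fintype α] : ℕ :=
  sInf {k | ∃ S : Finset α, IsDoubleTotalDomSet G S ∧ S.card = k}

/-- A 2-packing: the closed neighbourhoods of distinct members are disjoint. -/
def IsTwoPacking {α : Type*} (G : SimpleGraph α) (X : Finset α) : Prop :=
  ∀ u ∈ X, ∀ v ∈ X, u ≠ v →
    ∀ w, ¬ ((w = u ∨ G.Adj u w) ∧ (w = v ∨ G.Adj v w))

/-- The 2-packing number. -/
noncomputable def twoPackingNumber {α : Type*} (G : SimpleGraph α) [Fintype α] : ℕ :=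
  sSup {k | ∃ X : Finset α, IsTwoPacking G X ∧ X.card = k}

/-- A secure dominating set. -/
def IsSecureDomSet {α : Type*} (G : SimpleGraph α) (S : Finset α) : Prop :=
  IsDomSet G S ∧ ∀ v ∉ S, ∃ u ∈ S, G.Adj u v ∧ IsDomSet G (insert v (S.erase u))

/-- The secure domination number. -/
noncomputable def secureDomNumber {α : Type*} (G : SimpleGraph α) [Fintype α] : ℕ :=
  sInf {k | ∃ S : Finset α, IsSecureDomSet G S ∧ S.card = k}

/-- The corona product of two graphs. -/
def corona {α β : Type*} (G₁ : SimpleGraph α) (G₂ : SimpleGraph β) :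
    SimpleGraph (α ⊕ α × β) where
  Adj x y :=
    match x, y with
    | .inl a, .inl a' => G₁.Adj a a'
    | .inl a, .inr p => a = p.1
    | .inr p, .inl a => p.1 = a
    | .inr p, .inr q => p.1 = q.1 ∧ G₂.Adj p.2 q.2
  symm := by
    constructor
    rintro (a | p) (a' | q) h
    · exact G₁.adj_symm h
    · exact h.symm
    · exact h.symm
    · exact ⟨h.1.symm, G₂.adj_symm h.2⟩
  loopless := by
    constructor
    rintro (a | p) h
    · exact G₁.irrefl h
    · exact G₂.irrefl h.2

/-!
Pick any `b ∈ V(H)` and put weight `1` on the layer `V(G) × {b}`. Since `δ(G) ≥ 2`, every vertex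
of `G ∘ H` has two neighbours in this layer. For any set `S` with this property the indicator of
`S` is weak Roman dominating: after the guard at `u` moves to an unguarded vertex, every vertex
still sees a guard at whichever of its two neighbours in `S` is not `u`.
-/

section WeakRoman

variable {α : Type*} (G : SimpleGraph α)

theorem weakRomanNumber_le_sum [Fintype α] {f : α → ℕ} (hf : IsWRDF G f) :
    weakRomanNumber G ≤ ∑ v, f v :=
  Nat.sInf_le ⟨f, hf, rfl⟩

variable {G}

theorem IsDoubleTotalDomSet.isWRDF_indicator {S : Finset α} (hS : IsDoubleTotalDomSet G S) :
    IsWRDF G (fun v => if v ∈ S then 1 else 0) := by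
  refine ⟨fun v => by dsimp only; split_ifs <;> omega, fun v hv => ?_⟩
  have hvS : v ∉ S := by simpa using hv
  obtain ⟨u, hu, -, -, -, huv, -⟩ := hS v
  refine ⟨u, huv, by simp [hu], fun w ⟨_, hw⟩ => ?_⟩
  have keeps_guard : ∀ x ∈ S, x ≠ u → G.Adj x w → False := fun x hx hxu hxw => by
    have := hw x hxw.symm
    simp [Function.update, hxu, ne_of_mem_of_not_mem hx hvS, hx] at this
  obtain ⟨u₁, hu₁, u₂, hu₂, hne, h₁, h₂⟩ := hS w
  by_cases h : u₁ = u
  · exact keeps_guard u₂ hu₂ (h ▸ hne.symm) h₂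
  · exact keeps_guard u₁ hu₁ h h₁

theorem IsDoubleTotalDomSet.weakRomanNumber_le_card [Fintype α] {S : Finset α}
    (hS : IsDoubleTotalDomSet G S) : weakRomanNumber G ≤ #S := by
  simpa [sum_boole] using weakRomanNumber_le_sum G hS.isWRDF_indicator

theorem isDoubleTotalDomSet_univ [Fintype α]
    (hG : ∀ v : α, ∃ u₁ u₂, u₁ ≠ u₂ ∧ G.Adj v u₁ ∧ G.Adj v u₂) :
    IsDoubleTotalDomSet G univ := fun v => by
  obtain ⟨u₁, u₂, hne, h₁, h₂⟩ := hG v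
  exact ⟨u₁, mem_univ _, u₂, mem_univ _, hne, h₁.symm, h₂.symm⟩

theorem IsDoubleTotalDomSet.lexProd {β : Type*} {S : Finset α} (hS : IsDoubleTotalDomSet G S)
    (H : SimpleGraph β) (b : β) : IsDoubleTotalDomSet (lexProd G H) (S ×ˢ {b}) := fun p => by
  obtain ⟨u₁, hu₁, u₂, hu₂, hne, h₁, h₂⟩ := hS p.1
  exact ⟨(u₁, b), by simpa using hu₁, (u₂, b), by simpa using hu₂, by simpa using hne,
    Or.inl h₁, Or.inl h₂⟩

end WeakRoman

/-- For any graph `H` and any graph `G` of order `n` with minimum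
degree at least two, `γ_r(G∘H) ≤ n`. -/
theorem weakRoman_lexProd_le_card {α β : Type*} [Fintype α] [Fintype β]
    (G : SimpleGraph α) (H : SimpleGraph β)
    (hG : ∀ v : α, ∃ u₁ u₂, u₁ ≠ u₂ ∧ G.Adj v u₁ ∧ G.Adj v u₂) :
    weakRomanNumber (lexProd G H) ≤ Fintype.card α := by
  cases isEmpty_or_nonempty β with
  | inl hβ =>
    have hS : IsDoubleTotalDomSet (lexProd G H) ∅ := fun p => isEmptyElim p.2
    exact hS.weakRomanNumber_le_card.trans (Nat.zero_le _)
  | inr hβ =>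
    obtain ⟨b⟩ := hβ
    simpa using ((isDoubleTotalDomSet_univ hG).lexProd H b).weakRomanNumber_le_card
end

section
/- For any integer n ≥ 3 and any graph H with γ(H) ≥ 4, γ_r(C_n∘H) = n, where C_n is the cycle graph on n vertices. -/
open Finset
open scoped Classical

/-! Put weight `1` on every vertex `(a, b₀)` of one copy of `C_n`: a guard moving from
`(a', b₀)` into the layer `{a} × H` leaves every layer a neighbouring layer whose `b₀`-vertex
is still guarded, because every vertex of `C_n` has two neighbours. So `γ_r ≤ n`.

Conversely let `w a` be the weight of the layer `{a} × H`. If `w b ≤ 3`, some `(b, y)` is not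
dominated within its layer since `γ(H) ≥ 4`, so its guard comes from a neighbouring layer; if
also `w (b - 1) + w (b + 1) ≤ 1`, that guard empties the neighbouring layers and, the layer
over `b` now carrying at most `3`, some `(b, z)` is left undefended. Hence
`w (b - 1) + w (b + 1) ≥ 2` or `w (b - 1) + w b + w (b + 1) ≥ 4` for all `b`, and summing three
consecutive such inequalities gives `w (c - 2) + w (c - 1) + 2 w c + w (c + 1) + w (c + 2) ≥ 6`,
whence `∑ w ≥ n`. -/

open SimpleGraph

section Domination

variable {α β : Type*}

theorem not_undefended_of_adj {G : SimpleGraph α} {g : α → ℕ} {w x : α} (hwx : G.Adj w x)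
    (hx : g x ≠ 0) : ¬ Undefended G g w :=
  fun h => hx (h.2 x hwx)

theorem IsWRDF.exists_move {G : SimpleGraph α} {f : α → ℕ} (hf : IsWRDF G f) {v : α}
    (hv : f v = 0) :
    ∃ u g, G.Adj u v ∧ 1 ≤ f u ∧ g v = 1 ∧ g u = f u - 1 ∧
      (∀ w, w ≠ u → w ≠ v → g w = f w) ∧ ∀ w, ¬ Undefended G g w := by
  obtain ⟨u, huv, hu, hsafe⟩ := hf.2 v hv
  refine ⟨u, _, huv, hu, ?_, by simp, fun w hwu hwv => ?_, hsafe⟩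
  · simp [Function.update_of_ne huv.ne']
  · simp [Function.update_of_ne hwu, Function.update_of_ne hwv]

theorem undefended_lexProd_iff {G : SimpleGraph α} {H : SimpleGraph β} {g : α × β → ℕ}
    {a : α} {z : β} :
    Undefended (lexProd G H) g (a, z) ↔
      Undefended H (fun x => g (a, x)) z ∧ ∀ c x, G.Adj a c → g (c, x) = 0 := by
  constructor
  · rintro ⟨hz, hnbr⟩
    exact ⟨⟨hz, fun x hx => hnbr (a, x) (Or.inr ⟨rfl, hx⟩)⟩,
      fun c x hc => hnbr (c, x) (Or.inl hc)⟩
  · rintro ⟨⟨hz, hlayer⟩, hcross⟩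
    refine ⟨hz, fun ⟨c, x⟩ hadj => ?_⟩
    rcases hadj with hc | ⟨rfl, hx⟩
    exacts [hcross c x hc, hlayer x hx]

theorem domNumber_le_card [Fintype β] (H : SimpleGraph β) : domNumber H ≤ Fintype.card β :=
  Nat.sInf_le ⟨univ, fun v hv => absurd (mem_univ v) hv, card_univ⟩

theorem exists_undefended_of_sum_lt_domNumber [Fintype β] (H : SimpleGraph β) (g : β → ℕ)
    (hg : ∑ x, g x < domNumber H) : ∃ z, Undefended H g z := by
  by_contra! hdef
  set S := univ.filter fun x => g x ≠ 0
  have hS : IsDomSet H S := by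
    intro v hv
    have hv0 : g v = 0 := by simpa [S] using hv
    obtain ⟨x, hvx, hx⟩ : ∃ x, H.Adj v x ∧ g x ≠ 0 := by
      by_contra! h
      exact hdef v ⟨hv0, h⟩
    exact ⟨x, by simpa [S] using hx, hvx.symm⟩
  have hcard : S.card ≤ ∑ x, g x := calc
    S.card = S.card • 1 := by simp
    _ ≤ ∑ x ∈ S, g x :=
      card_nsmul_le_sum _ _ _ fun x hx => Nat.one_le_iff_ne_zero.2 (mem_filter.1 hx).2
    _ ≤ ∑ x, g x := sum_le_sum_of_subset (subset_univ _)
  have hdom : domNumber H ≤ S.card := Nat.sInf_le ⟨S, hS, rfl⟩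
  omega

theorem weakRomanNumber_le [Fintype α] {G : SimpleGraph α} {f : α → ℕ} (hf : IsWRDF G f) :
    weakRomanNumber G ≤ ∑ v, f v :=
  Nat.sInf_le ⟨f, hf, rfl⟩

theorem le_weakRomanNumber [Fintype α] {G : SimpleGraph α} {k : ℕ}
    (h : ∀ f, IsWRDF G f → k ≤ ∑ v, f v) : k ≤ weakRomanNumber G := by
  have hconst : IsWRDF G fun _ => 2 := ⟨fun _ => le_rfl, fun _ hv => absurd hv two_ne_zero⟩
  obtain ⟨f, hf, hsum⟩ : weakRomanNumber G ∈ {k | ∃ f, IsWRDF G f ∧ ∑ v, f v = k} :=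
    Nat.sInf_mem ⟨_, _, hconst, rfl⟩
  exact hsum ▸ h f hf

end Domination

theorem forall_eq_zero_of_sum_le_one {ι : Type*} {T : Finset ι} {f g : ι → ℕ} {u : ι}
    (hT : ∑ p ∈ T, f p ≤ 1) (hu : u ∈ T) (hfu : 1 ≤ f u) (hgu : g u = f u - 1)
    (hg : ∀ p ∈ T, p ≠ u → g p = f p) : ∀ p ∈ T, g p = 0 := by
  intro p hp
  by_cases hpu : p = u
  · have := (sum_le_one_iff.1 hT u u hu hu (by omega) (by omega)).2
    rw [hpu, hgu]
    omega
  · rw [hg p hp hpu]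
    by_contra hp0
    exact hpu (sum_le_one_iff.1 hT p u hp hu hp0 (by omega)).1

section LexProd

variable {α β : Type*} {G : SimpleGraph α} {H : SimpleGraph β}

def layerWeight [Fintype β] (f : α × β → ℕ) (a : α) : ℕ := ∑ x, f (a, x)

theorem sum_eq_sum_layerWeight [Fintype α] [Fintype β] (f : α × β → ℕ) :
    ∑ p, f p = ∑ a, layerWeight f a :=
  Fintype.sum_prod_type f

theorem isWRDF_lexProd_row (hG : ∀ a, ∃ c c', c ≠ c' ∧ G.Adj a c ∧ G.Adj a c')
    (b₀ : β) :
    IsWRDF (lexProd G H) fun p => if p.2 = b₀ then 1 else 0 := by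
  refine ⟨fun p => by dsimp only; split <;> omega, fun ⟨a, b⟩ hv => ?_⟩
  have hb : b ≠ b₀ := by simpa using hv
  obtain ⟨a', -, -, haa', -⟩ := hG a
  refine ⟨(a', b₀), Or.inl haa'.symm, by simp, fun ⟨c, x⟩ => ?_⟩
  obtain ⟨c₁, c₂, hc, hc₁, hc₂⟩ := hG c
  -- `(c', b₀)` still carries `1` after the move
  obtain ⟨c', hc', hca'⟩ : ∃ c', G.Adj c c' ∧ c' ≠ a' := by
    by_cases h : c₁ = a'
    exacts [⟨c₂, hc₂, h ▸ hc.symm⟩, ⟨c₁, hc₁, h⟩]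
  refine not_undefended_of_adj (x := (c', b₀)) (Or.inl hc') ?_
  simp [hca', hb.symm]

theorem IsWRDF.two_le_or_four_le_add [Fintype α] [Fintype β] (hH : 4 ≤ domNumber H)
    {f : α × β → ℕ} (hf : IsWRDF (lexProd G H) f) (b : α) :
    2 ≤ ∑ c ∈ G.neighborFinset b, layerWeight f c ∨
      4 ≤ layerWeight f b + ∑ c ∈ G.neighborFinset b, layerWeight f c := by
  set s := ∑ c ∈ G.neighborFinset b, layerWeight f c
  by_contra! hsmall
  set T := G.neighborFinset b ×ˢ (univ : Finset β)
  have hT : ∑ p ∈ T, f p = s := sum_product _ _ _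
  obtain ⟨y, hy⟩ := exists_undefended_of_sum_lt_domNumber H (fun x => f (b, x))
    (by unfold layerWeight at hsmall; omega)
  obtain ⟨⟨a, t⟩, g, hadj, hat, hgy, hgat, hg, hsafe⟩ := hf.exists_move hy.1
  have hba : G.Adj b a := by
    rcases hadj with h | ⟨rfl, h⟩
    exacts [h.symm, absurd (hy.2 t h.symm) (Nat.one_le_iff_ne_zero.1 hat)]
  have hatT : (a, t) ∈ T := by simpa [T] using hba
  have hs : 1 ≤ s := hT ▸ hat.trans (single_le_sum (fun p _ => Nat.zero_le (f p)) hatT)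
  have hgT : ∀ p ∈ T, g p = 0 :=
    forall_eq_zero_of_sum_le_one (by omega) hatT hat hgat fun p hp hpa =>
      hg p hpa (by rintro rfl; simp [T] at hp)
  set g₂ := Function.update (fun x => f (b, x)) y 1
  have hg₂ : ∑ x, g₂ x < domNumber H := by
    have : ∑ x, g₂ x ≤ 1 + layerWeight f b := by
      rw [sum_update_of_mem (mem_univ y)]
      exact Nat.add_le_add_left (sum_le_sum_of_subset sdiff_subset) 1
    omega
  obtain ⟨z, hz⟩ := exists_undefended_of_sum_lt_domNumber H g₂ hg₂
  have hlayer : (fun x => g (b, x)) = g₂ := by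
    funext x
    by_cases hxy : x = y
    · simp [g₂, hxy, hgy]
    · simp [g₂, hxy, hg (b, x) (by simp [hba.ne]) (by simp [hxy])]
  rw [← hlayer] at hz
  exact hsafe (b, z) <| undefended_lexProd_iff.2
    ⟨hz, fun c x hc => hgT (c, x) (by simpa [T] using hc)⟩

end LexProd

theorem card_le_sum_of_two_le_or_four_le {A : Type*} [AddCommGroup A] [Fintype A] (d : A)
    (w : A → ℕ)
    (h : ∀ b, 2 ≤ w (b - d) + w (b + d) ∨ 4 ≤ w b + (w (b - d) + w (b + d))) :
    Fintype.card A ≤ ∑ a, w a := by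
  have hwindow : ∀ c, 6 ≤ w (c - d - d) + w (c - d) + 2 * w c + w (c + d) + w (c + d + d) := by
    intro c
    have h₁ := h (c - d)
    have h₃ := h (c + d)
    rw [sub_add_cancel] at h₁
    rw [add_sub_cancel_right] at h₃
    have := h c
    omega
  have hshift : ∀ e : A, ∑ c, w (c + e) = ∑ a, w a := fun e =>
    Equiv.sum_comp (Equiv.addRight e) w
  -- summed over all `c`, the windows count every `w a` six times
  calc Fintype.card A = (∑ _c : A, 6) / 6 := by simp
    _ ≤ (∑ c, (w (c - d - d) + w (c - d) + 2 * w c + w (c + d) + w (c + d + d))) / 6 :=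
      Nat.div_le_div_right (sum_le_sum fun c _ => hwindow c)
    _ = ∑ a, w a := by
      simp only [sub_eq_add_neg, add_assoc, sum_add_distrib, ← mul_sum, hshift]
      omega

theorem Fin.sub_one_ne_add_one {m : ℕ} (b : Fin (m + 3)) : b - 1 ≠ b + 1 := by
  intro h
  have := cycleGraph_degree_three_le (v := b)
  simp [cycleGraph_degree_two_le, h] at this

theorem cycleGraph_sum_neighborFinset {m : ℕ} (w : Fin (m + 3) → ℕ) (b : Fin (m + 3))
    [Fintype ((cycleGraph (m + 3)).neighborSet b)] :
    ∑ c ∈ (cycleGraph (m + 3)).neighborFinset b, w c = w (b - 1) + w (b + 1) := by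
  have hnbr : (cycleGraph (m + 3)).neighborFinset b = {b - 1, b + 1} :=
    coe_injective (by simp [cycleGraph_neighborSet])
  rw [hnbr, sum_pair b.sub_one_ne_add_one]

theorem cycleGraph_exists_two_adj {m : ℕ} (a : Fin (m + 3)) :
    ∃ c c', c ≠ c' ∧ (cycleGraph (m + 3)).Adj a c ∧ (cycleGraph (m + 3)).Adj a c' := by
  refine ⟨a - 1, a + 1, a.sub_one_ne_add_one, ?_, ?_⟩ <;>
    simp [← mem_neighborFinset, cycleGraph_neighborFinset]

/-- For any `n ≥ 3` and any graph `H` with `γ(H) ≥ 4`,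
`γ_r(C_n∘H) = n`. -/
theorem weakRoman_lexProd_cycle {β : Type*} [Fintype β]
    (n : ℕ) (hn : 3 ≤ n) (H : SimpleGraph β) (hH : 4 ≤ domNumber H) :
    weakRomanNumber (lexProd (SimpleGraph.cycleGraph n) H) = n := by
  obtain ⟨m, rfl⟩ : ∃ m, n = m + 3 := ⟨n - 3, by omega⟩
  obtain ⟨b₀⟩ : Nonempty β :=
    Fintype.card_pos_iff.1 (by have := domNumber_le_card H; omega)
  apply le_antisymm
  · refine (weakRomanNumber_le (isWRDF_lexProd_row cycleGraph_exists_two_adj b₀)).trans_eq ?_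
    rw [Fintype.sum_prod_type]
    simp
  · refine le_weakRomanNumber fun f hf => ?_
    calc m + 3 = Fintype.card (Fin (m + 3)) := (Fintype.card_fin _).symm
      _ ≤ ∑ a, layerWeight f a := card_le_sum_of_two_le_or_four_le 1 _ fun b => by
        simpa only [cycleGraph_sum_neighborFinset] using hf.two_le_or_four_le_add hH b
      _ = ∑ v, f v := (sum_eq_sum_layerWeight f).symm
end
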